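/- Let G be a finite group, and let M, P, Q be G-lattices (finitely generated Z-free Z[G]-modules) with P a direct summand of a permutation G-lattice and Q coflasque (i.e. H^1(H,Q)=0 for all subgroups H of G). Suppose there is an exact sequence 0 → M → P → Q/αQ → 0 for some injective G-endomorphism α of Q. Then there is an exact sequence of G-lattices 0 → M → P ⊕ Q → Q → 0. -/

import Mathlib

open Function

section Core
variable (G : Type) [Group G]

/-- A map is `G`-equivariant. -/
def IsEquivMapP {M N : Type} [AddCommGroup M] [AddCommGroup N]
    [DistribMulAction G M] [DistribMulAction G N] (f : M → N) : Prop :=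
  ∀ (g : G) (m : M), f (g • m) = g • f m

/-- `M` is a permutation `G`-lattice: it has a finite `ℤ`-basis permuted by `G`. -/
def IsPermLat (M : Type) [AddCommGroup M] [DistribMulAction G M] : Prop :=
  ∃ (ι : Type) (_ : Fintype ι) (b : Module.Basis ι ℤ M) (σ : G → ι → ι),
    ∀ (g : G) (i : ι), g • (b i : M) = b (σ g i)

/-- `M` is a lattice: finitely generated and free over `ℤ`. -/
def IsLat (M : Type) [AddCommGroup M] : Prop := Module.Free ℤ M ∧ Module.Finite ℤ M

/-- A short exact sequence `0 → M → E → P → 0` of `G`-modules. -/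
def ShortExactG (M E P : Type) [AddCommGroup M] [AddCommGroup E] [AddCommGroup P]
    [DistribMulAction G M] [DistribMulAction G E] [DistribMulAction G P] : Prop :=
  ∃ (i : M →+ E) (p : E →+ P), IsEquivMapP G i ∧ IsEquivMapP G p ∧
    Injective i ∧ Surjective p ∧ i.range = p.ker

/-- Colliot-Thélène–Sansuc equivalence of `G`-lattices. -/
def LatEquiv (M N : Type) [AddCommGroup M] [AddCommGroup N]
    [DistribMulAction G M] [DistribMulAction G N] : Prop :=
  ∃ (E : Type) (_ : AddCommGroup E) (_ : DistribMulAction G E)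
    (P : Type) (_ : AddCommGroup P) (_ : DistribMulAction G P)
    (Q : Type) (_ : AddCommGroup Q) (_ : DistribMulAction G Q),
    IsLat E ∧ IsPermLat G P ∧ IsPermLat G Q ∧
    ShortExactG G M E P ∧ ShortExactG G N E Q

/-- `M` is stably permutation. -/
def IsStablyPerm (M : Type) [AddCommGroup M] [DistribMulAction G M] : Prop :=
  ∃ (P : Type) (_ : AddCommGroup P) (_ : DistribMulAction G P)
    (Q : Type) (_ : AddCommGroup Q) (_ : DistribMulAction G Q),
    IsPermLat G P ∧ IsPermLat G Q ∧
    ∃ e : (M × P) ≃+ Q, IsEquivMapP G e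

/-- `M` is permutation projective: a direct summand of a permutation lattice. -/
def IsPermProj (M : Type) [AddCommGroup M] [DistribMulAction G M] : Prop :=
  ∃ (P : Type) (_ : AddCommGroup P) (_ : DistribMulAction G P), IsPermLat G P ∧
    ∃ (i : M →+ P) (r : P →+ M), IsEquivMapP G i ∧ IsEquivMapP G r ∧ ∀ m, r (i m) = m

/-- `M` is quasi-permutation: it embeds into a permutation lattice with permutation quotient. -/
def IsQuasiPerm (M : Type) [AddCommGroup M] [DistribMulAction G M] : Prop :=
  ∃ (P : Type) (_ : AddCommGroup P) (_ : DistribMulAction G P)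
    (Q : Type) (_ : AddCommGroup Q) (_ : DistribMulAction G Q),
    IsPermLat G P ∧ IsPermLat G Q ∧ ShortExactG G M P Q

variable (M : Type) [AddCommGroup M] [DistribMulAction G M]

/-- 1-cocycles. -/
def Z1 : AddSubgroup (G → M) where
  carrier := {f | ∀ g h : G, f (g * h) = g • f h + f g}
  zero_mem' := by intro g h; simp
  add_mem' := by
    intro f f' hf hf' g h
    simp only [Pi.add_apply, hf g h, hf' g h, smul_add]; abel
  neg_mem' := by
    intro f hf g h
    simp only [Pi.neg_apply, hf g h, smul_neg]; abel

/-- The coboundary homomorphism. -/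
def coboundHom : M →+ Z1 G M where
  toFun m := ⟨fun g => g • m - m, by intro g h; simp only [mul_smul, smul_sub]; abel⟩
  map_zero' := by apply Subtype.ext; funext g; simp
  map_add' := by
    intro a b; apply Subtype.ext; funext g
    show g • (a + b) - (a + b) = (g • a - a) + (g • b - b)
    simp only [smul_add]; abel

/-- 1-coboundaries. -/
def B1 : AddSubgroup (Z1 G M) := (coboundHom G M).range

/-- First group cohomology `H¹(G, M)`. -/
abbrev H1 := Z1 G M ⧸ B1 G M

/-- Restriction of cocycles to a subgroup. -/
def resZ1 (H : Subgroup G) : Z1 G M →+ Z1 H M where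
  toFun f := ⟨fun h => f.1 h, by
    intro a b
    have := f.2 (a : G) (b : G)
    simpa [Subgroup.smul_def] using this⟩
  map_zero' := rfl
  map_add' := fun _ _ => rfl

/-- Restriction on `H¹`. -/
def resH1 (H : Subgroup G) : H1 G M →+ H1 H M :=
  QuotientAddGroup.map _ _ (resZ1 G M H) (by
    rintro _ ⟨m, rfl⟩
    exact ⟨m, Subtype.ext rfl⟩)

/-- `Ш¹(G, M)`. -/
def Sha1 : AddSubgroup (H1 G M) :=
  ⨅ g : G, (resH1 G M (Subgroup.zpowers g)).ker

/-- `M` is coflasque: `H¹(H, M) = 0` for all subgroups `H ≤ G`. -/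
def IsCoflasque : Prop := ∀ H : Subgroup G, ∀ x y : H1 H M, x = y

end Core

section Core2
variable (G : Type) [Group G] (M : Type) [AddCommGroup M] [DistribMulAction G M]

/-- 2-cocycles. -/
def Z2 : AddSubgroup (G → G → M) where
  carrier := {f | ∀ g h k : G, g • f h k - f (g * h) k + f g (h * k) - f g h = 0}
  zero_mem' := by intro g h k; simp
  add_mem' := by
    intro f f' hf hf' g h k
    have h1 := hf g h k; have h2 := hf' g h k
    simp only [Pi.add_apply, smul_add]
    calc g • f h k + g • f' h k - (f (g * h) k + f' (g * h) k) +
          (f g (h * k) + f' g (h * k)) - (f g h + f' g h)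
        = (g • f h k - f (g * h) k + f g (h * k) - f g h) +
          (g • f' h k - f' (g * h) k + f' g (h * k) - f' g h) := by abel
      _ = 0 := by rw [h1, h2, add_zero]
  neg_mem' := by
    intro f hf g h k
    have h1 := hf g h k
    simp only [Pi.neg_apply, smul_neg]
    calc -(g • f h k) - -f (g * h) k + -f g (h * k) - -f g h
        = -(g • f h k - f (g * h) k + f g (h * k) - f g h) := by abel
      _ = 0 := by rw [h1, neg_zero]

/-- The 2-coboundary homomorphism. -/
def cobound2Hom : (G → M) →+ Z2 G M where
  toFun u := ⟨fun g h => g • u h - u (g * h) + u g, by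
    intro g h k
    simp only [mul_smul, smul_sub, smul_add, mul_assoc]
    abel⟩
  map_zero' := by apply Subtype.ext; funext g h; simp
  map_add' := by
    intro a b; apply Subtype.ext; funext g h
    show g • (a h + b h) - (a (g * h) + b (g * h)) + (a g + b g)
        = (g • a h - a (g * h) + a g) + (g • b h - b (g * h) + b g)
    simp only [smul_add]; abel

/-- 2-coboundaries. -/
def B2 : AddSubgroup (Z2 G M) := (cobound2Hom G M).range

/-- Second group cohomology `H²(G, M)`. -/
abbrev H2 := Z2 G M ⧸ B2 G M

/-- Restriction of 2-cocycles to a subgroup. -/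
def resZ2 (H : Subgroup G) : Z2 G M →+ Z2 H M where
  toFun f := ⟨fun a b => f.1 a b, by
    intro a b c
    have := f.2 (a : G) (b : G) (c : G)
    simpa [Subgroup.smul_def] using this⟩
  map_zero' := rfl
  map_add' := fun _ _ => rfl

/-- Restriction on `H²`. -/
def resH2 (H : Subgroup G) : H2 G M →+ H2 H M :=
  QuotientAddGroup.map _ _ (resZ2 G M H) (by
    rintro _ ⟨u, rfl⟩
    exact ⟨fun h : H => u (h : G), Subtype.ext rfl⟩)

/-- `Ш²(G, M)`. -/
def Sha2 : AddSubgroup (H2 G M) :=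
  ⨅ g : G, (resH2 G M (Subgroup.zpowers g)).ker

/-- The subgroup `2M`. -/
def twoSub : AddSubgroup M :=
  (AddMonoidHom.mk' (fun m : M => (2 : ℤ) • m) (by
    intro a b
    show (2 : ℤ) • (a + b) = (2 : ℤ) • a + (2 : ℤ) • b
    rw [smul_add])).range

/-- `M/2M`. -/
abbrev ModTwo := M ⧸ twoSub M

noncomputable instance : SMul G (ModTwo M) :=
  ⟨fun g => QuotientAddGroup.map _ _ (DistribMulAction.toAddMonoidHom M g) (by
    rintro _ ⟨m, rfl⟩
    refine ⟨g • m, ?_⟩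
    show (2 : ℤ) • (g • m) = g • ((2 : ℤ) • m)
    rw [smul_comm])⟩

theorem modTwo_smul_mk (g : G) (m : M) :
    g • (QuotientAddGroup.mk m : ModTwo M) = QuotientAddGroup.mk (g • m) := rfl

noncomputable instance : DistribMulAction G (ModTwo M) where
  one_smul x := by
    obtain ⟨m, rfl⟩ := QuotientAddGroup.mk_surjective x
    rw [modTwo_smul_mk, one_smul]
  mul_smul g h x := by
    obtain ⟨m, rfl⟩ := QuotientAddGroup.mk_surjective x
    rw [modTwo_smul_mk, modTwo_smul_mk, modTwo_smul_mk, mul_smul]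
  smul_zero g := map_zero (QuotientAddGroup.map _ _ (DistribMulAction.toAddMonoidHom M g) _)
  smul_add g x y := map_add (QuotientAddGroup.map _ _ (DistribMulAction.toAddMonoidHom M g) _) x y

variable [Finite G]

/-- Kernel of the norm map (for a finite group). -/
def normKer : AddSubgroup M where
  carrier := {x | ∑ᶠ g : G, g • x = 0}
  zero_mem' := by simp
  add_mem' := by
    intro x y hx hy
    have hx' : ∑ᶠ g : G, g • x = 0 := hx
    have hy' : ∑ᶠ g : G, g • y = 0 := hy
    show ∑ᶠ g : G, g • (x + y) = 0
    simp only [smul_add]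
    rw [finsum_add_distrib (Set.toFinite _) (Set.toFinite _), hx', hy', add_zero]
  neg_mem' := by
    intro x hx
    have hx' : ∑ᶠ g : G, g • x = 0 := hx
    show ∑ᶠ g : G, g • (-x) = 0
    simp only [smul_neg]
    rw [finsum_neg_distrib, hx', neg_zero]

/-- The subgroup generated by elements `g • m - m`. -/
def augSub : AddSubgroup M := AddSubgroup.closure {x | ∃ (g : G) (m : M), x = g • m - m}

/-- Tate cohomology `Ĥ⁻¹(G, M)` (for a finite group `G`). -/
abbrev TateNeg1 := normKer G M ⧸ ((augSub G M).addSubgroupOf (normKer G M))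

/-- `M` is flasque: `Ĥ⁻¹(H, M) = 0` for all subgroups `H ≤ G`. -/
def IsFlasque : Prop := ∀ H : Subgroup G, ∀ x y : TateNeg1 H M, x = y

end Core2

section Core3
variable (G : Type) [Group G]

/-- `M` is equivalent to a direct summand of a quasi-permutation `G`-lattice. -/
def IsEquivSummandQP (M : Type) [AddCommGroup M] [DistribMulAction G M] : Prop :=
  ∃ (S : Type) (_ : AddCommGroup S) (_ : DistribMulAction G S)
    (D : Type) (_ : AddCommGroup D) (_ : DistribMulAction G D)
    (D' : Type) (_ : AddCommGroup D') (_ : DistribMulAction G D'),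
    IsLat S ∧ IsQuasiPerm G S ∧ (∃ e : (D × D') ≃+ S, IsEquivMapP G e) ∧
    LatEquiv G M D

end Core3

section Tensor
open TensorProduct
variable (G : Type) [Group G] (M : Type) [AddCommGroup M] [DistribMulAction G M]

/-- The action of `g : G` as a `ℤ`-linear map. -/
def gLin (g : G) : M →ₗ[ℤ] M := (DistribMulAction.toAddMonoidHom M g).toIntLinearMap

noncomputable instance tensorSMul : SMul G (M ⊗[ℤ] M) :=
  ⟨fun g => TensorProduct.map (gLin G M g) (gLin G M g)⟩

theorem tsmul_def (g : G) (x : M ⊗[ℤ] M) :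
    g • x = TensorProduct.map (gLin G M g) (gLin G M g) x := rfl

theorem gLin_one : gLin G M 1 = LinearMap.id := by
  ext m; show (1 : G) • m = m; rw [one_smul]

theorem gLin_mul (g h : G) : gLin G M (g * h) = (gLin G M g).comp (gLin G M h) := by
  ext m; show (g * h) • m = g • h • m; rw [mul_smul]

noncomputable instance tensorAct : DistribMulAction G (M ⊗[ℤ] M) where
  one_smul x := by rw [tsmul_def, gLin_one, TensorProduct.map_id]; rfl
  mul_smul g h x := by
    rw [tsmul_def, tsmul_def, tsmul_def, gLin_mul, TensorProduct.map_comp]; rfl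
  smul_zero g := map_zero _
  smul_add g x y := map_add _ x y

/-- Generators of the symmetric relation. -/
def symSpan : Submodule ℤ (M ⊗[ℤ] M) :=
  Submodule.span ℤ {x | ∃ a b : M, x = a ⊗ₜ[ℤ] b - b ⊗ₜ[ℤ] a}

/-- Generators of the wedge relation. -/
def wedSpan : Submodule ℤ (M ⊗[ℤ] M) :=
  Submodule.span ℤ {x | ∃ a : M, x = a ⊗ₜ[ℤ] a}

/-- The second symmetric power `Sym²M`. -/
abbrev Sym2Q := (M ⊗[ℤ] M) ⧸ symSpan M

/-- The second exterior power `∧²M`. -/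
abbrev Wedge2Q := (M ⊗[ℤ] M) ⧸ wedSpan M

theorem symSpan_le_comap (g : G) :
    symSpan M ≤ (symSpan M).comap (TensorProduct.map (gLin G M g) (gLin G M g)) := by
  refine Submodule.map_le_iff_le_comap.1 ?_
  erw [symSpan, Submodule.map_span]
  refine Submodule.span_le.2 ?_
  rintro _ ⟨_, ⟨a, b, rfl⟩, rfl⟩
  refine Submodule.subset_span ?_
  exact ⟨g • a, g • b, by erw [map_sub, TensorProduct.map_tmul, TensorProduct.map_tmul]; rfl⟩

theorem wedSpan_le_comap (g : G) :
    wedSpan M ≤ (wedSpan M).comap (TensorProduct.map (gLin G M g) (gLin G M g)) := by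
  refine Submodule.map_le_iff_le_comap.1 ?_
  erw [wedSpan, Submodule.map_span]
  refine Submodule.span_le.2 ?_
  rintro _ ⟨_, ⟨a, rfl⟩, rfl⟩
  exact Submodule.subset_span ⟨g • a, by erw [TensorProduct.map_tmul]; rfl⟩

noncomputable instance sym2SMul : SMul G (Sym2Q M) :=
  ⟨fun g => Submodule.mapQ _ _ (TensorProduct.map (gLin G M g) (gLin G M g))
    (symSpan_le_comap G M g)⟩

noncomputable instance wedge2SMul : SMul G (Wedge2Q M) :=
  ⟨fun g => Submodule.mapQ _ _ (TensorProduct.map (gLin G M g) (gLin G M g))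
    (wedSpan_le_comap G M g)⟩

theorem sym2_smul_mk (g : G) (x : M ⊗[ℤ] M) :
    g • ((symSpan M).mkQ x) = (symSpan M).mkQ (g • x) :=
  Submodule.mapQ_apply _ _ _ _

theorem wedge2_smul_mk (g : G) (x : M ⊗[ℤ] M) :
    g • ((wedSpan M).mkQ x) = (wedSpan M).mkQ (g • x) :=
  Submodule.mapQ_apply _ _ _ _

noncomputable instance sym2Act : DistribMulAction G (Sym2Q M) where
  one_smul x := by
    obtain ⟨y, rfl⟩ := (symSpan M).mkQ_surjective x
    rw [sym2_smul_mk, one_smul]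
  mul_smul g h x := by
    obtain ⟨y, rfl⟩ := (symSpan M).mkQ_surjective x
    rw [sym2_smul_mk, sym2_smul_mk, sym2_smul_mk, mul_smul]
  smul_zero g := by
    show g • (symSpan M).mkQ 0 = (symSpan M).mkQ 0
    rw [sym2_smul_mk, smul_zero]
  smul_add g x y := by
    obtain ⟨a, rfl⟩ := (symSpan M).mkQ_surjective x
    obtain ⟨b, rfl⟩ := (symSpan M).mkQ_surjective y
    rw [← map_add, sym2_smul_mk, sym2_smul_mk, sym2_smul_mk, smul_add, map_add]

noncomputable instance wedge2Act : DistribMulAction G (Wedge2Q M) where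
  one_smul x := by
    obtain ⟨y, rfl⟩ := (wedSpan M).mkQ_surjective x
    rw [wedge2_smul_mk, one_smul]
  mul_smul g h x := by
    obtain ⟨y, rfl⟩ := (wedSpan M).mkQ_surjective x
    rw [wedge2_smul_mk, wedge2_smul_mk, wedge2_smul_mk, mul_smul]
  smul_zero g := by
    show g • (wedSpan M).mkQ 0 = (wedSpan M).mkQ 0
    rw [wedge2_smul_mk, smul_zero]
  smul_add g x y := by
    obtain ⟨a, rfl⟩ := (wedSpan M).mkQ_surjective x
    obtain ⟨b, rfl⟩ := (wedSpan M).mkQ_surjective y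
    rw [← map_add, wedge2_smul_mk, wedge2_smul_mk, wedge2_smul_mk, smul_add, map_add]

variable {M} {N : Type} [AddCommGroup N]

/-- The map `Sym²f` induced by a linear map `f`. -/
noncomputable def sym2Map (f : M →ₗ[ℤ] N) : Sym2Q M →ₗ[ℤ] Sym2Q N :=
  Submodule.mapQ _ _ (TensorProduct.map f f) (by
    refine Submodule.map_le_iff_le_comap.1 ?_
    erw [symSpan, Submodule.map_span]
    refine Submodule.span_le.2 ?_
    rintro _ ⟨_, ⟨a, b, rfl⟩, rfl⟩
    exact Submodule.subset_span ⟨f a, f b, by erw [map_sub, TensorProduct.map_tmul, TensorProduct.map_tmul]⟩)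

/-- The map `∧²f` induced by a linear map `f`. -/
noncomputable def wedge2Map (f : M →ₗ[ℤ] N) : Wedge2Q M →ₗ[ℤ] Wedge2Q N :=
  Submodule.mapQ _ _ (TensorProduct.map f f) (by
    refine Submodule.map_le_iff_le_comap.1 ?_
    erw [wedSpan, Submodule.map_span]
    refine Submodule.span_le.2 ?_
    rintro _ ⟨_, ⟨a, rfl⟩, rfl⟩
    exact Submodule.subset_span ⟨f a, by erw [TensorProduct.map_tmul]⟩)

end Tensor

section PermMod
variable (G : Type) [Group G] (X : Type) [MulAction G X]

/-- The permutation action on `ℤ[X] = X → ℤ`. -/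
instance permSMul : SMul G (X → ℤ) := ⟨fun g f x => f (g⁻¹ • x)⟩

theorem perm_smul_def (g : G) (f : X → ℤ) (x : X) : (g • f) x = f (g⁻¹ • x) := rfl

instance permAct : DistribMulAction G (X → ℤ) where
  one_smul f := funext fun x => by rw [perm_smul_def, inv_one, one_smul]
  mul_smul g h f := funext fun x => by
    rw [perm_smul_def, perm_smul_def, perm_smul_def, mul_inv_rev, mul_smul]
  smul_zero g := rfl
  smul_add g f f' := rfl

variable [Fintype X]

/-- The augmentation kernel `A = ker(ℤ[X] → ℤ)`. -/
def augKer : AddSubgroup (X → ℤ) where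
  carrier := {f | ∑ x, f x = 0}
  zero_mem' := by simp
  add_mem' := by
    intro a b ha hb
    have ha' : ∑ x, a x = 0 := ha
    have hb' : ∑ x, b x = 0 := hb
    show ∑ x, (a x + b x) = 0
    rw [Finset.sum_add_distrib, ha', hb', add_zero]
  neg_mem' := by
    intro a ha
    have ha' : ∑ x, a x = 0 := ha
    show ∑ x, (-(a x)) = 0
    rw [Finset.sum_neg_distrib, ha', neg_zero]

theorem smul_mem_augKer (g : G) (f : X → ℤ) (hf : f ∈ augKer X) :
    g • f ∈ augKer X := by
  have hf' : ∑ x, f x = 0 := hf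
  show ∑ x, f (g⁻¹ • x) = 0
  exact (Equiv.sum_comp (MulAction.toPerm (g⁻¹ : G)) f).trans hf'

instance augKerSMul : SMul G (augKer X) :=
  ⟨fun g f => ⟨g • (f : X → ℤ), smul_mem_augKer G X g f f.2⟩⟩

theorem augKer_smul_def (g : G) (f : augKer X) :
    ((g • f : augKer X) : X → ℤ) = g • (f : X → ℤ) := rfl

instance augKerAct : DistribMulAction G (augKer X) where
  one_smul f := Subtype.ext (by rw [augKer_smul_def, one_smul])
  mul_smul g h f := Subtype.ext (by
    rw [augKer_smul_def, augKer_smul_def, augKer_smul_def, mul_smul])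
  smul_zero g := Subtype.ext (by
    rw [augKer_smul_def]
    show g • (0 : X → ℤ) = 0
    rw [smul_zero])
  smul_add g f f' := Subtype.ext (by
    show g • ((f : X → ℤ) + f') = g • (f : X → ℤ) + g • (f' : X → ℤ)
    rw [smul_add])

end PermMod

section P2sec
variable (G : Type) [Group G]

/-- The set of 2-element subsets of `X`. -/
def P2 (X : Type) [DecidableEq X] : Type := {s : Finset X // s.card = 2}

noncomputable instance (X : Type) [DecidableEq X] [Fintype X] : Fintype (P2 X) := by
  unfold P2; infer_instance

instance p2SMul (X : Type) [DecidableEq X] [MulAction G X] : SMul G (P2 X) :=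
  ⟨fun g s => ⟨s.1.image (fun x => g • x), by
    rw [Finset.card_image_of_injective _ (MulAction.injective g)]; exact s.2⟩⟩

theorem p2_smul_def (X : Type) [DecidableEq X] [MulAction G X] (g : G) (s : P2 X) :
    (g • s).1 = s.1.image (fun x => g • x) := rfl

instance p2Act (X : Type) [DecidableEq X] [MulAction G X] : MulAction G (P2 X) where
  one_smul s := Subtype.ext (by
    rw [p2_smul_def]
    simp)
  mul_smul g h s := Subtype.ext (by
    simp only [p2_smul_def, Finset.image_image]
    refine Finset.image_congr ?_
    intro x _
    exact mul_smul g h x)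

end P2sec

/-- The root lattice `A_{n-1}` as an `S_n`-lattice. -/
abbrev rootLat (n : ℕ) := augKer (Fin n)


/-!
Since `Q` is coflasque, `H¹(H, Q) = 0` for every subgroup `H`, so the long exact sequence of
`0 → Q → Q → Q/αQ → 0` shows that `c : Q → Q/αQ` is surjective on `H`-fixed points. A permutation
lattice is a sum of modules `ℤ[G/H]`, so every equivariant map from it to `Q/αQ` lifts through `c`,
and hence so does every map from a direct summand `P`. Given a lift `β : P → Q` of `p`, the map
`P ⊕ Q → Q`, `(x, q) ↦ β x - α q`, is onto, and its kernel is `M`, embedded by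
`m ↦ (i m, α⁻¹ (β (i m)))`.
-/

theorem IsEquivMapP.comp {G M N K : Type} [Group G] [AddCommGroup M] [AddCommGroup N]
    [AddCommGroup K] [DistribMulAction G M] [DistribMulAction G N] [DistribMulAction G K]
    {f : N → K} {g : M → N} (hf : IsEquivMapP G f) (hg : IsEquivMapP G g) :
    IsEquivMapP G (f ∘ g) := fun a m => by
  rw [Function.comp_apply, hg, hf]; rfl

theorem exists_equivariant_section {G ι X : Type} [Group G] [MulAction G ι] [MulAction G X]
    (S : ι → X → Prop) (hS : ∀ (g : G) i x, S i x → S (g • i) (g • x))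
    (hfix : ∀ i, ∃ x, S i x ∧ ∀ g : G, g • i = i → g • x = x) :
    ∃ f : ι → X, (∀ i, S i (f i)) ∧ ∀ (g : G) i, f (g • i) = g • f i := by
  choose x hxS hxfix using hfix
  set rep : ι → ι := fun i => (Quotient.mk (MulAction.orbitRel G ι) i).out
  have hrep_smul : ∀ (g : G) i, rep (g • i) = rep i := fun g i =>
    congrArg Quotient.out (Quotient.sound ((MulAction.orbitRel_apply).2 ⟨g, rfl⟩))
  have hrep : ∀ i, ∃ g : G, g • rep i = i := fun i => by
    obtain ⟨g, hg⟩ := (MulAction.orbitRel_apply).1 (Quotient.exact (Quotient.out_eq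
      (Quotient.mk (MulAction.orbitRel G ι) i)))
    exact ⟨g⁻¹, by rw [show rep i = g • i from hg.symm, inv_smul_smul]⟩
  choose t ht using hrep
  refine ⟨fun i => t i • x (rep i), fun i => ?_, fun g i => ?_⟩
  · simpa only [ht] using hS (t i) _ _ (hxS (rep i))
  have ht' : t (g • i) • rep i = g • i := hrep_smul g i ▸ ht (g • i)
  have hstab : ((t (g • i))⁻¹ * (g * t i)) • rep i = rep i := by
    rw [mul_smul, mul_smul, ht i, inv_smul_eq_iff, ht']
  calc t (g • i) • x (rep (g • i))
      = t (g • i) • ((t (g • i))⁻¹ * (g * t i)) • x (rep i) := by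
        rw [hrep_smul, hxfix _ _ hstab]
    _ = g • t i • x (rep i) := by rw [smul_smul, mul_inv_cancel_left, mul_smul]

theorem IsPermLat.exists_basis_smul {G L : Type} [Group G] [AddCommGroup L]
    [DistribMulAction G L] (hL : IsPermLat G L) :
    ∃ (ι : Type) (_ : MulAction G ι) (b : Module.Basis ι ℤ L),
      ∀ (g : G) (i : ι), g • b i = b (g • i) := by
  obtain ⟨ι, _, b, σ, hb⟩ := hL
  have hσ_one : ∀ i, σ 1 i = i := fun i => b.injective (by rw [← hb, one_smul])
  have hσ_mul : ∀ g h i, σ (g * h) i = σ g (σ h i) := fun g h i =>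
    b.injective (by rw [← hb, ← hb, ← hb, mul_smul])
  exact ⟨ι, { smul := σ, one_smul := hσ_one, mul_smul := hσ_mul }, b, hb⟩

/-- Surjectivity of `H⁰(H, B) → H⁰(H, C)` for every subgroup `H`. -/
def IsSurjOnFixedPoints (G : Type) {B C : Type} [Group G] [AddCommGroup B] [AddCommGroup C]
    [DistribMulAction G B] [DistribMulAction G C] (c : B →+ C) : Prop :=
  ∀ (H : Subgroup G) (y : C), (∀ h ∈ H, h • y = y) → ∃ q, c q = y ∧ ∀ h ∈ H, h • q = q

section Lifting
variable {G : Type} [Group G]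
variable {A B C : Type} [AddCommGroup A] [AddCommGroup B] [AddCommGroup C]
  [DistribMulAction G A] [DistribMulAction G B] [DistribMulAction G C]

theorem exists_fixed_preimage_of_subsingleton_H1 (H : Subgroup G) [Subsingleton (H1 H A)]
    {α : A →+ B} (hα : IsEquivMapP G α) (hαinj : Injective α)
    {c : B →+ C} (hc : IsEquivMapP G c) (hexact : c.ker = α.range)
    {q₀ : B} (hq₀ : ∀ h ∈ H, h • c q₀ = c q₀) :
    ∃ q, c q = c q₀ ∧ ∀ h ∈ H, h • q = q := by
  have hker : ∀ q, c q = 0 → q ∈ α.range := fun q hq => hexact ▸ hq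
  have hcα : ∀ a, c (α a) = 0 := fun a => (hexact ▸ ⟨a, rfl⟩ : α a ∈ c.ker)
  have hdiff : ∀ h : H, ∃ a, α a = (h : G) • q₀ - q₀ := fun h =>
    hker _ (by rw [map_sub, hc, hq₀ h h.2, sub_self])
  choose f hf using hdiff
  -- `f` is the cocycle representing the image of `c q₀` under the connecting map to `H¹(H, A)`.
  have hcocycle : f ∈ Z1 H A := fun g h => hαinj <| by
    rw [map_add, Subgroup.smul_def, hα, hf, hf, hf, Subgroup.coe_mul, mul_smul, smul_sub]
    abel
  obtain ⟨a, ha⟩ : (⟨f, hcocycle⟩ : Z1 H A) ∈ B1 H A :=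
    (QuotientAddGroup.eq_zero_iff _).1 (Subsingleton.elim _ _)
  refine ⟨q₀ - α a, by rw [map_sub, hcα, sub_zero], ?_⟩
  intro h hh
  have hfa : (h : G) • a - a = f ⟨h, hh⟩ := congrFun (congrArg Subtype.val ha) ⟨h, hh⟩
  have hαfa := hf ⟨h, hh⟩
  rw [← hfa, map_sub, hα] at hαfa
  rw [smul_sub]
  linear_combination (norm := abel) -hαfa

theorem IsCoflasque.isSurjOnFixedPoints (hA : IsCoflasque G A)
    {α : A →+ B} (hα : IsEquivMapP G α) (hαinj : Injective α)
    {c : B →+ C} (hc : IsEquivMapP G c) (hcsurj : Surjective c) (hexact : c.ker = α.range) :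
    IsSurjOnFixedPoints G c := by
  intro H y hy
  obtain ⟨q₀, rfl⟩ := hcsurj y
  have : Subsingleton (H1 H A) := ⟨hA H⟩
  exact exists_fixed_preimage_of_subsingleton_H1 H hα hαinj hc hexact hy

theorem IsPermLat.exists_lift {L : Type} [AddCommGroup L] [DistribMulAction G L]
    (hL : IsPermLat G L) {c : B →+ C} (hc : IsEquivMapP G c) (hcfix : IsSurjOnFixedPoints G c)
    (φ : L →+ C) (hφ : IsEquivMapP G φ) :
    ∃ ψ : L →+ B, IsEquivMapP G ψ ∧ ∀ x, c (ψ x) = φ x := by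
  obtain ⟨ι, _, b, hb⟩ := hL.exists_basis_smul
  obtain ⟨f, hfc, hf⟩ := exists_equivariant_section (G := G) (fun i q => c q = φ (b i))
    (fun g i q hq => by rw [hc, hq, ← hφ, hb])
    (fun i => hcfix (MulAction.stabilizer G i) _ fun g hg => by rw [← hφ, hb, hg])
  refine ⟨(b.constr ℤ f).toAddMonoidHom, fun g x => ?_, fun x => ?_⟩
  · have hcomm : (b.constr ℤ f).comp (gLin G L g) = (gLin G B g).comp (b.constr ℤ f) :=
      b.ext fun i => by
        change b.constr ℤ f (g • b i) = g • b.constr ℤ f (b i)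
        rw [hb, Module.Basis.constr_basis, Module.Basis.constr_basis, hf]
    exact LinearMap.congr_fun hcomm x
  · have hcomp : c.toIntLinearMap.comp (b.constr ℤ f) = φ.toIntLinearMap :=
      b.ext fun i => by simp [hfc]
    exact LinearMap.congr_fun hcomp x

theorem IsPermProj.exists_lift {P : Type} [AddCommGroup P] [DistribMulAction G P]
    (hP : IsPermProj G P) {c : B →+ C} (hc : IsEquivMapP G c) (hcfix : IsSurjOnFixedPoints G c)
    (φ : P →+ C) (hφ : IsEquivMapP G φ) :
    ∃ ψ : P →+ B, IsEquivMapP G ψ ∧ ∀ x, c (ψ x) = φ x := by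
  obtain ⟨L, _, _, hL, s, r, hs, hr, hrs⟩ := hP
  obtain ⟨ψ, hψ, hψc⟩ := hL.exists_lift hc hcfix (φ.comp r) (hφ.comp hr)
  exact ⟨ψ.comp s, hψ.comp hs, fun x => (hψc (s x)).trans (congrArg φ (hrs x))⟩

end Lifting

section Extensions
variable {G : Type} [Group G]
variable {M P A B C : Type} [AddCommGroup M] [AddCommGroup P] [AddCommGroup A] [AddCommGroup B]
  [AddCommGroup C] [DistribMulAction G M] [DistribMulAction G P] [DistribMulAction G A]
  [DistribMulAction G B]

theorem exists_equivariant_factor_of_injective {α : A →+ B} (hα : IsEquivMapP G α)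
    (hαinj : Injective α) {β : M →+ B} (hβ : IsEquivMapP G β) (hβα : ∀ m, β m ∈ α.range) :
    ∃ γ : M →+ A, IsEquivMapP G γ ∧ ∀ m, α (γ m) = β m := by
  choose γ hγ using hβα
  refine ⟨AddMonoidHom.mk' γ fun m m' => hαinj ?_, fun g m => hαinj ?_, hγ⟩
  · rw [map_add, hγ, hγ, hγ, map_add]
  · change α (γ (g • m)) = α (g • γ m)
    rw [hα, hγ, hγ, hβ]

/-- The maps are `m ↦ (i m, α⁻¹ (β (i m)))` and `(x, a) ↦ β x - α a`. -/
theorem shortExactG_prod_of_map_over {α : A →+ B} (hα : IsEquivMapP G α) (hαinj : Injective α)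
    {c : B →+ C} (hexact : c.ker = α.range)
    {i : M →+ P} {p : P →+ C} (hi : IsEquivMapP G i) (hiinj : Injective i)
    (hpsurj : Surjective p) (hip : i.range = p.ker)
    {β : P →+ B} (hβ : IsEquivMapP G β) (hβc : ∀ x, c (β x) = p x) :
    ShortExactG G M (P × A) B := by
  have hker : ∀ b, c b = 0 → b ∈ α.range := fun b hb => hexact ▸ hb
  have hcα : ∀ a, c (α a) = 0 := fun a => (hexact ▸ ⟨a, rfl⟩ : α a ∈ c.ker)
  have hpi : ∀ m, p (i m) = 0 := fun m => (hip ▸ ⟨m, rfl⟩ : i m ∈ p.ker)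
  obtain ⟨γ, hγ, hαγ⟩ := exists_equivariant_factor_of_injective hα hαinj
    (β := β.comp i) (hβ.comp hi) fun m => hker _ (by rw [AddMonoidHom.comp_apply, hβc, hpi])
  refine ⟨i.prod γ, β.comp (AddMonoidHom.fst P A) - α.comp (AddMonoidHom.snd P A),
    fun g m => Prod.ext (hi g m) (hγ g m), fun g x => ?_,
    fun m m' h => hiinj (congrArg Prod.fst h), fun b => ?_, ?_⟩
  · change β (g • x.1) - α (g • x.2) = g • (β x.1 - α x.2)
    rw [hβ, hα, smul_sub]
  · obtain ⟨x, hx⟩ := hpsurj (c b)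
    obtain ⟨a, ha⟩ := hker (β x - b) (by rw [map_sub, hβc, hx, sub_self])
    exact ⟨(x, a), by change β x - α a = b; rw [ha, sub_sub_cancel]⟩
  · ext ⟨x, a⟩
    simp only [AddMonoidHom.mem_range, AddMonoidHom.mem_ker, AddMonoidHom.sub_apply,
      AddMonoidHom.comp_apply, AddMonoidHom.prod_apply, AddMonoidHom.coe_fst,
      AddMonoidHom.coe_snd, Prod.mk.injEq, sub_eq_zero]
    constructor
    · rintro ⟨m, rfl, rfl⟩
      exact (hαγ m).symm
    · intro hxa
      obtain ⟨m, rfl⟩ : x ∈ i.range := by rw [hip, AddMonoidHom.mem_ker, ← hβc, hxa, hcα]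
      exact ⟨m, rfl, hαinj ((hαγ m).trans hxa)⟩

end Extensions

theorem stmt_0_general (G : Type) [Group G]
    (M P Q : Type) [AddCommGroup M] [AddCommGroup P] [AddCommGroup Q]
    [DistribMulAction G M] [DistribMulAction G P] [DistribMulAction G Q]
    (hPproj : IsPermProj G P) (hQco : IsCoflasque G Q)
    (α : Q →+ Q) (hαeq : IsEquivMapP G α) (hαinj : Function.Injective α)
    (C : Type) [AddCommGroup C] [DistribMulAction G C]
    (c : Q →+ C) (hceq : IsEquivMapP G c) (hcsurj : Function.Surjective c)
    (hcker : c.ker = α.range)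
    (i : M →+ P) (p : P →+ C) (hieq : IsEquivMapP G i) (hpeq : IsEquivMapP G p)
    (hiinj : Function.Injective i) (hpsurj : Function.Surjective p)
    (hex : i.range = p.ker) :
    ∃ (i' : M →+ P × Q) (p' : P × Q →+ Q),
      IsEquivMapP G i' ∧ IsEquivMapP G p' ∧ Function.Injective i' ∧
      Function.Surjective p' ∧ i'.range = p'.ker := by
  obtain ⟨β, hβ, hβc⟩ := hPproj.exists_lift hceq
    (hQco.isSurjOnFixedPoints hαeq hαinj hceq hcsurj hcker) p hpeq
  exact shortExactG_prod_of_map_over hαeq hαinj hcker hieq hiinj hpsurj hex hβ hβc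

theorem stmt_0 (G : Type) [Group G] [Finite G]
    (M P Q : Type) [AddCommGroup M] [AddCommGroup P] [AddCommGroup Q]
    [DistribMulAction G M] [DistribMulAction G P] [DistribMulAction G Q]
    (hM : IsLat M) (hP : IsLat P) (hQ : IsLat Q)
    (hPproj : IsPermProj G P) (hQco : IsCoflasque G Q)
    (α : Q →+ Q) (hαeq : IsEquivMapP G α) (hαinj : Function.Injective α)
    (C : Type) [AddCommGroup C] [DistribMulAction G C]
    (c : Q →+ C) (hceq : IsEquivMapP G c) (hcsurj : Function.Surjective c)
    (hcker : c.ker = α.range)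
    (i : M →+ P) (p : P →+ C) (hieq : IsEquivMapP G i) (hpeq : IsEquivMapP G p)
    (hiinj : Function.Injective i) (hpsurj : Function.Surjective p)
    (hex : i.range = p.ker) :
    ∃ (i' : M →+ P × Q) (p' : P × Q →+ Q),
      IsEquivMapP G i' ∧ IsEquivMapP G p' ∧ Function.Injective i' ∧
      Function.Surjective p' ∧ i'.range = p'.ker :=
  stmt_0_general G M P Q hPproj hQco α hαeq hαinj C c hceq hcsurj hcker i p hieq hpeq hiinj hpsurj
    hex
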